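/- Let ≿ be an IB preference on 𝓕 with nonconstant affine utility index u : X → ℝ (with 0 in the interior of u(X)) as in the minmax representation. Define 𝒬* = {Q ⊆ Δ : Q is nonempty, convex and weak*-compact, and max_{q∈Q} ∫ u(f) dq ≥ u(x_f) for all f ∈ 𝓕}, where x_f is a certainty equivalent of f. Then: (a) for every f ∈ 𝓕, min_{Q∈𝒬*} max_{q∈Q} ∫ u(f) dq = u(x_f), so 𝒬* satisfies the minmax representation of ≿; and (b) every family 𝒬 of nonempty, convex, weak*-compact subsets of Δ satisfying the minmax representation of ≿ with the same u is contained in 𝒬*; thus 𝒬* is the unique maximal such family. -/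

import Mathlib

open scoped Pointwise
open MeasureTheory

namespace Paper

variable {S V : Type*}

/-- An algebra of subsets of `S` (the events `Σ`). -/
structure IsSetAlg (𝓐 : Set (Set S)) : Prop where
  empty_mem : ∅ ∈ 𝓐
  compl_mem : ∀ A ∈ 𝓐, Aᶜ ∈ 𝓐
  union_mem : ∀ A ∈ 𝓐, ∀ B ∈ 𝓐, A ∪ B ∈ 𝓐

/-- `B₀(Σ)`: real-valued `Σ`-measurable simple functions. -/
def IsSimpleFn (𝓐 : Set (Set S)) (φ : S → ℝ) : Prop :=
  (Set.range φ).Finite ∧ ∀ t : ℝ, φ ⁻¹' {t} ∈ 𝓐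

open Classical in
/-- The integral of a simple function with respect to a finitely additive set function. -/
noncomputable def fint (p : Set S → ℝ) (φ : S → ℝ) : ℝ :=
  if h : (Set.range φ).Finite then ∑ t ∈ h.toFinset, t * p (φ ⁻¹' {t}) else 0

/-- `Δ`: the finitely additive probabilities on `Σ` (canonically extended by `0` off `Σ`). -/
def Δset (𝓐 : Set (Set S)) : Set (Set S → ℝ) :=
  {p | p Set.univ = 1 ∧ (∀ A ∈ 𝓐, 0 ≤ p A) ∧
    (∀ A ∈ 𝓐, ∀ B ∈ 𝓐, Disjoint A B → p (A ∪ B) = p A + p B) ∧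
    ∀ A : Set S, A ∉ 𝓐 → p A = 0}

/-- The weak* topology `σ(Δ, B₀(Σ))`, i.e. the topology induced by the evaluation maps
`p ↦ ∫ φ dp`, `φ ∈ B₀(Σ)`. -/
noncomputable def weakStar (𝓐 : Set (Set S)) : TopologicalSpace (Set S → ℝ) :=
  TopologicalSpace.induced
    (fun p => fun φ : {φ : S → ℝ // IsSimpleFn 𝓐 φ} => fint p φ.1)
    Pi.topologicalSpace

/-- `𝒞`: the weak*-lower semicontinuous convex functions `c : Δ → (-∞, ∞]`. -/
def Cscr (𝓐 : Set (Set S)) : Set ((Set S → ℝ) → EReal) :=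
  {c | (∀ p ∈ Δset 𝓐, ⊥ < c p) ∧
    (@LowerSemicontinuousOn (Set S → ℝ) EReal (weakStar 𝓐) _ c (Δset 𝓐)) ∧
    ∀ p ∈ Δset 𝓐, ∀ q ∈ Δset 𝓐, ∀ a b : ℝ, 0 ≤ a → 0 ≤ b → a + b = 1 →
      c (a • p + b • q) ≤ (a : EReal) * c p + (b : EReal) * c q}

/-- A subset `C ⊆ 𝒞` is grounded if `sup_{c ∈ C} min_{p ∈ Δ} c p = 0`. -/
def Grounded (𝓐 : Set (Set S)) (C : Set ((Set S → ℝ) → EReal)) : Prop :=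
  (⨆ c ∈ C, ⨅ p ∈ Δset 𝓐, c p) = 0

/-- `min_{p ∈ Δ} (∫ φ dp + c p)`. -/
noncomputable def minVal (𝓐 : Set (Set S)) (c : (Set S → ℝ) → EReal) (φ : S → ℝ) : EReal :=
  ⨅ p ∈ Δset 𝓐, ((fint p φ : EReal) + c p)

/-- `max_{q ∈ Δ} (∫ φ dq - b q)`. -/
noncomputable def maxVal (𝓐 : Set (Set S)) (b : (Set S → ℝ) → EReal) (φ : S → ℝ) : EReal :=
  ⨆ q ∈ Δset 𝓐, ((fint q φ : EReal) - b q)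

/-- `max_{c ∈ C} min_{p ∈ Δ} (∫ φ dp + c p)`. -/
noncomputable def maxminVal (𝓐 : Set (Set S)) (C : Set ((Set S → ℝ) → EReal))
    (φ : S → ℝ) : EReal :=
  ⨆ c ∈ C, minVal 𝓐 c φ

/-- `min_{b ∈ B} max_{q ∈ Δ} (∫ φ dq - b q)`. -/
noncomputable def minmaxVal (𝓐 : Set (Set S)) (B : Set ((Set S → ℝ) → EReal))
    (φ : S → ℝ) : EReal :=
  ⨅ b ∈ B, maxVal 𝓐 b φ

/-- `min_{p ∈ P} ∫ φ dp`. -/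
noncomputable def minPVal (P : Set (Set S → ℝ)) (φ : S → ℝ) : EReal :=
  ⨅ p ∈ P, (fint p φ : EReal)

/-- `max_{q ∈ Q} ∫ φ dq`. -/
noncomputable def maxQVal (Q : Set (Set S → ℝ)) (φ : S → ℝ) : EReal :=
  ⨆ q ∈ Q, (fint q φ : EReal)

/-- `max_{P ∈ Pfam} min_{p ∈ P} ∫ φ dp`. -/
noncomputable def maxminPVal (Pfam : Set (Set (Set S → ℝ))) (φ : S → ℝ) : EReal :=
  ⨆ P ∈ Pfam, minPVal P φ

/-- `min_{Q ∈ Qfam} max_{q ∈ Q} ∫ φ dq`. -/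
noncomputable def minmaxQVal (Qfam : Set (Set (Set S → ℝ))) (φ : S → ℝ) : EReal :=
  ⨅ Q ∈ Qfam, maxQVal Q φ

open Classical in
/-- The convex-analytic indicator `δ_P` of a set `P`. -/
noncomputable def ind (P : Set (Set S → ℝ)) : (Set S → ℝ) → EReal :=
  fun p => if p ∈ P then (0 : EReal) else ⊤

variable [AddCommGroup V] [Module ℝ V]

/-- `𝓕`: the simple acts, i.e. `Σ`-measurable maps `f : S → X` with finitely many values. -/
def Acts (𝓐 : Set (Set S)) (X : Set V) : Set (S → V) :=
  {f | (∀ s, f s ∈ X) ∧ (Set.range f).Finite ∧ ∀ v : V, f ⁻¹' {v} ∈ 𝓐}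

/-- The constant act with value `x`. -/
def constAct (x : V) : S → V := fun _ : S => x

/-- The mixture `α f + (1 - α) g` of two acts, defined statewise. -/
def mix (α : ℝ) (f g : S → V) : S → V := fun s => α • f s + (1 - α) • g s

/-- The statewise utility `u ∘ f` of an act. -/
def uAct (u : V → ℝ) (f : S → V) : S → ℝ := fun s => u (f s)

/-- `u : X → ℝ` is nonconstant and affine on `X`. -/
def IsNonconstAffine (X : Set V) (u : V → ℝ) : Prop :=
  (∀ x ∈ X, ∀ y ∈ X, ∀ t ∈ Set.Icc (0 : ℝ) 1,
      u (t • x + (1 - t) • y) = t * u x + (1 - t) * u y) ∧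
  ∃ x ∈ X, ∃ y ∈ X, u x ≠ u y

/-- A niveloidal preference: Axioms A1 (weak order), A2 (monotonicity), A3 (Archimedean)
and A4 (weak C-independence). -/
structure NiveloidalPref (𝓐 : Set (Set S)) (X : Set V)
    (R : (S → V) → (S → V) → Prop) : Prop where
  nontrivial : ∃ f ∈ Acts 𝓐 X, ∃ g ∈ Acts 𝓐 X, R f g ∧ ¬ R g f
  complete : ∀ f ∈ Acts 𝓐 X, ∀ g ∈ Acts 𝓐 X, R f g ∨ R g f
  transitive : ∀ f ∈ Acts 𝓐 X, ∀ g ∈ Acts 𝓐 X, ∀ h ∈ Acts 𝓐 X, R f g → R g h → R f h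
  monotone : ∀ f ∈ Acts 𝓐 X, ∀ g ∈ Acts 𝓐 X,
    (∀ s : S, R (constAct (f s)) (constAct (g s))) → R f g
  archimedean : ∀ f ∈ Acts 𝓐 X, ∀ g ∈ Acts 𝓐 X, ∀ h ∈ Acts 𝓐 X,
    (R f g ∧ ¬ R g f) → (R g h ∧ ¬ R h g) →
    ∃ α ∈ Set.Ioo (0 : ℝ) 1, ∃ β ∈ Set.Ioo (0 : ℝ) 1,
      (R (mix α f h) g ∧ ¬ R g (mix α f h)) ∧
      (R g (mix β f h) ∧ ¬ R (mix β f h) g)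
  weakCIndep : ∀ f ∈ Acts 𝓐 X, ∀ g ∈ Acts 𝓐 X, ∀ x ∈ X, ∀ y ∈ X,
    ∀ α ∈ Set.Ioo (0 : ℝ) 1,
    R (mix α f (constAct x)) (mix α g (constAct x)) →
    R (mix α f (constAct y)) (mix α g (constAct y))

/-- An invariant biseparable preference: Axioms A1 (weak order), A2 (monotonicity),
A3 (Archimedean) and A7 (C-independence). -/
structure IBPref (𝓐 : Set (Set S)) (X : Set V)
    (R : (S → V) → (S → V) → Prop) : Prop where
  nontrivial : ∃ f ∈ Acts 𝓐 X, ∃ g ∈ Acts 𝓐 X, R f g ∧ ¬ R g f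
  complete : ∀ f ∈ Acts 𝓐 X, ∀ g ∈ Acts 𝓐 X, R f g ∨ R g f
  transitive : ∀ f ∈ Acts 𝓐 X, ∀ g ∈ Acts 𝓐 X, ∀ h ∈ Acts 𝓐 X, R f g → R g h → R f h
  monotone : ∀ f ∈ Acts 𝓐 X, ∀ g ∈ Acts 𝓐 X,
    (∀ s : S, R (constAct (f s)) (constAct (g s))) → R f g
  archimedean : ∀ f ∈ Acts 𝓐 X, ∀ g ∈ Acts 𝓐 X, ∀ h ∈ Acts 𝓐 X,
    (R f g ∧ ¬ R g f) → (R g h ∧ ¬ R h g) →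
    ∃ α ∈ Set.Ioo (0 : ℝ) 1, ∃ β ∈ Set.Ioo (0 : ℝ) 1,
      (R (mix α f h) g ∧ ¬ R g (mix α f h)) ∧
      (R g (mix β f h) ∧ ¬ R (mix β f h) g)
  cIndep : ∀ f ∈ Acts 𝓐 X, ∀ g ∈ Acts 𝓐 X, ∀ x ∈ X, ∀ α ∈ Set.Ioo (0 : ℝ) 1,
    (R f g ↔ R (mix α f (constAct x)) (mix α g (constAct x)))

/-- Axiom A5 (uncertainty aversion). -/
def UncertaintyAverse (𝓐 : Set (Set S)) (X : Set V)
    (R : (S → V) → (S → V) → Prop) : Prop :=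
  ∀ f ∈ Acts 𝓐 X, ∀ g ∈ Acts 𝓐 X, ∀ α ∈ Set.Ioo (0 : ℝ) 1,
    R f g → R g f → R (mix α f g) f

/-- `xf` assigns to every act a certainty equivalent. -/
def IsCE (𝓐 : Set (Set S)) (X : Set V) (R : (S → V) → (S → V) → Prop)
    (xf : (S → V) → V) : Prop :=
  ∀ f ∈ Acts 𝓐 X, xf f ∈ X ∧ R f (constAct (xf f)) ∧ R (constAct (xf f)) f

/-- `C*`: the maximal candidate set of penalty functions. -/
def CstarOf (𝓐 : Set (Set S)) (X : Set V) (u : V → ℝ) (xf : (S → V) → V) :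
    Set ((Set S → ℝ) → EReal) :=
  {c | c ∈ Cscr 𝓐 ∧ ∀ f ∈ Acts 𝓐 X, minVal 𝓐 c (uAct u f) ≤ (u (xf f) : EReal)}

/-- `B*`: the maximal candidate set of reward functions. -/
def BstarOf (𝓐 : Set (Set S)) (X : Set V) (u : V → ℝ) (xf : (S → V) → V) :
    Set ((Set S → ℝ) → EReal) :=
  {b | b ∈ Cscr 𝓐 ∧ ∀ f ∈ Acts 𝓐 X, (u (xf f) : EReal) ≤ maxVal 𝓐 b (uAct u f)}

/-- `Pfam*`: the maximal family of prior sets (maxmin form). -/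
def PstarOf (𝓐 : Set (Set S)) (X : Set V) (u : V → ℝ) (xf : (S → V) → V) :
    Set (Set (Set S → ℝ)) :=
  {P | P ⊆ Δset 𝓐 ∧ P.Nonempty ∧ Convex ℝ P ∧ (@IsCompact _ (weakStar 𝓐) P) ∧
    ∀ f ∈ Acts 𝓐 X, minPVal P (uAct u f) ≤ (u (xf f) : EReal)}

/-- `Qfam*`: the maximal family of prior sets (minmax form). -/
def QstarOf (𝓐 : Set (Set S)) (X : Set V) (u : V → ℝ) (xf : (S → V) → V) :
    Set (Set (Set S → ℝ)) :=
  {Q | Q ⊆ Δset 𝓐 ∧ Q.Nonempty ∧ Convex ℝ Q ∧ (@IsCompact _ (weakStar 𝓐) Q) ∧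
    ∀ f ∈ Acts 𝓐 X, (u (xf f) : EReal) ≤ maxQVal Q (uAct u f)}

/-- `C` yields the maxmin representation of `R` with utility `u`. -/
def MaxminRep (𝓐 : Set (Set S)) (X : Set V) (R : (S → V) → (S → V) → Prop)
    (u : V → ℝ) (C : Set ((Set S → ℝ) → EReal)) : Prop :=
  ∀ f ∈ Acts 𝓐 X, ∀ g ∈ Acts 𝓐 X,
    (R f g ↔ maxminVal 𝓐 C (uAct u g) ≤ maxminVal 𝓐 C (uAct u f))

/-- All indicated maxima over `C` and minima over `Δ` are attained. -/
def MaxminAttained (𝓐 : Set (Set S)) (X : Set V) (u : V → ℝ)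
    (C : Set ((Set S → ℝ) → EReal)) : Prop :=
  ∀ f ∈ Acts 𝓐 X,
    (∀ c ∈ C, ∃ p ∈ Δset 𝓐,
      minVal 𝓐 c (uAct u f) = (fint p (uAct u f) : EReal) + c p) ∧
    ∃ c ∈ C, maxminVal 𝓐 C (uAct u f) = minVal 𝓐 c (uAct u f)

/-- `B` yields the minmax representation of `R` with utility `u`. -/
def MinmaxRep (𝓐 : Set (Set S)) (X : Set V) (R : (S → V) → (S → V) → Prop)
    (u : V → ℝ) (B : Set ((Set S → ℝ) → EReal)) : Prop :=
  ∀ f ∈ Acts 𝓐 X, ∀ g ∈ Acts 𝓐 X,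
    (R f g ↔ minmaxVal 𝓐 B (uAct u g) ≤ minmaxVal 𝓐 B (uAct u f))

/-- All indicated minima over `B` and maxima over `Δ` are attained. -/
def MinmaxAttained (𝓐 : Set (Set S)) (X : Set V) (u : V → ℝ)
    (B : Set ((Set S → ℝ) → EReal)) : Prop :=
  ∀ f ∈ Acts 𝓐 X,
    (∀ b ∈ B, ∃ q ∈ Δset 𝓐,
      maxVal 𝓐 b (uAct u f) = (fint q (uAct u f) : EReal) - b q) ∧
    ∃ b ∈ B, minmaxVal 𝓐 B (uAct u f) = maxVal 𝓐 b (uAct u f)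

/-- A family of nonempty, convex, weak*-compact subsets of `Δ`. -/
def IsPriorFamily (𝓐 : Set (Set S)) (Pfam : Set (Set (Set S → ℝ))) : Prop :=
  Pfam.Nonempty ∧ ∀ P ∈ Pfam,
    P ⊆ Δset 𝓐 ∧ P.Nonempty ∧ Convex ℝ P ∧ (@IsCompact _ (weakStar 𝓐) P)

/-- `Pfam` yields the maxmin representation of `R` with utility `u`. -/
def PRep (𝓐 : Set (Set S)) (X : Set V) (R : (S → V) → (S → V) → Prop)
    (u : V → ℝ) (Pfam : Set (Set (Set S → ℝ))) : Prop :=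
  ∀ f ∈ Acts 𝓐 X, ∀ g ∈ Acts 𝓐 X,
    (R f g ↔ maxminPVal Pfam (uAct u g) ≤ maxminPVal Pfam (uAct u f))

/-- All indicated maxima over `Pfam` and minima over `P` are attained. -/
def PAttained (𝓐 : Set (Set S)) (X : Set V) (u : V → ℝ)
    (Pfam : Set (Set (Set S → ℝ))) : Prop :=
  ∀ f ∈ Acts 𝓐 X,
    (∀ P ∈ Pfam, ∃ p ∈ P, minPVal P (uAct u f) = (fint p (uAct u f) : EReal)) ∧
    ∃ P ∈ Pfam, maxminPVal Pfam (uAct u f) = minPVal P (uAct u f)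

/-- `Qfam` yields the minmax representation of `R` with utility `u`. -/
def QRep (𝓐 : Set (Set S)) (X : Set V) (R : (S → V) → (S → V) → Prop)
    (u : V → ℝ) (Qfam : Set (Set (Set S → ℝ))) : Prop :=
  ∀ f ∈ Acts 𝓐 X, ∀ g ∈ Acts 𝓐 X,
    (R f g ↔ minmaxQVal Qfam (uAct u g) ≤ minmaxQVal Qfam (uAct u f))

/-- All indicated minima over `Qfam` and maxima over `Q` are attained. -/
def QAttained (𝓐 : Set (Set S)) (X : Set V) (u : V → ℝ)
    (Qfam : Set (Set (Set S → ℝ))) : Prop :=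
  ∀ f ∈ Acts 𝓐 X,
    (∀ Q ∈ Qfam, ∃ q ∈ Q, maxQVal Q (uAct u f) = (fint q (uAct u f) : EReal)) ∧
    ∃ Q ∈ Qfam, minmaxQVal Qfam (uAct u f) = maxQVal Q (uAct u f)

/-- `c₁ ≈_u c₂`: `c₁` and `c₂` induce the same variational functional on `B₀(Σ, u(X))`. -/
def ApproxEq (𝓐 : Set (Set S)) (X : Set V) (u : V → ℝ)
    (c₁ c₂ : (Set S → ℝ) → EReal) : Prop :=
  ∀ φ : S → ℝ, IsSimpleFn 𝓐 φ → (∀ s, φ s ∈ u '' X) →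
    minVal 𝓐 c₁ φ = minVal 𝓐 c₂ φ

/-- `R₁` is more ambiguity averse than `R₂`. -/
def MoreAmbiguityAverse (𝓐 : Set (Set S)) (X : Set V)
    (R₁ R₂ : (S → V) → (S → V) → Prop) : Prop :=
  ∀ f ∈ Acts 𝓐 X, ∀ x ∈ X, R₂ (constAct x) f → R₁ (constAct x) f

/-- `u₁` and `u₂` are positive affine transformations of each other on `X`. -/
def CardEquiv (X : Set V) (u₁ u₂ : V → ℝ) : Prop :=
  ∃ a b : ℝ, 0 < a ∧ ∀ x ∈ X, u₂ x = a * u₁ x + b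

/-- A capacity on `(S, Σ)`. -/
def IsCapacity (𝓐 : Set (Set S)) (π : Set S → ℝ) : Prop :=
  π ∅ = 0 ∧ π Set.univ = 1 ∧ ∀ A ∈ 𝓐, ∀ B ∈ 𝓐, A ⊆ B → π A ≤ π B

/-- The Choquet integral of a (simple) function against a capacity. -/
noncomputable def choquet (π : Set S → ℝ) (φ : S → ℝ) : ℝ :=
  (∫ t in Set.Ioi (0 : ℝ), π {s | t ≤ φ s}) +
    ∫ t in Set.Iio (0 : ℝ), (π {s | t ≤ φ s} - 1)

/-!
A family representing `≿` evaluates every constant act `x` at `u(x)`, hence evaluates every act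
`f ∼ x_f` at `u(x_f)`; so each of its members `Q` satisfies `max_Q ∫ u(f) ≥ u(x_f)`, i.e. lies in
`𝒬*`. Conversely every member of `𝒬*` is at least `u(x_f)` at `f` by definition, and the value
`u(x_f)` is attained by a member of the given representing family, which lies in `𝒬*`.
-/

namespace IsSetAlg

variable {𝓐 : Set (Set S)}

lemma univ_mem (hA : IsSetAlg 𝓐) : Set.univ ∈ 𝓐 := by
  simpa using hA.compl_mem ∅ hA.empty_mem

lemma biUnion_mem (hA : IsSetAlg 𝓐) {ι : Type*} {s : Set ι} (hs : s.Finite)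
    {g : ι → Set S} (hg : ∀ i ∈ s, g i ∈ 𝓐) : (⋃ i ∈ s, g i) ∈ 𝓐 := by
  induction s, hs using Set.Finite.induction_on with
  | empty => simpa using hA.empty_mem
  | @insert a s _ _ ih =>
    rw [Set.biUnion_insert]
    exact hA.union_mem _ (hg a (Set.mem_insert a s)) _
      (ih fun i hi => hg i (Set.mem_insert_of_mem a hi))

end IsSetAlg

lemma constAct_mem_acts {W : Type*} {𝓐 : Set (Set S)} (hA : IsSetAlg 𝓐) {X : Set W} {x : W}
    (hx : x ∈ X) : constAct (S := S) x ∈ Acts 𝓐 X := by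
  refine ⟨fun _ => hx, (Set.finite_singleton x).subset (Set.range_subset_iff.2 fun _ => rfl),
    fun v => ?_⟩
  classical
  rw [show constAct (S := S) x = fun _ => x from rfl, Set.preimage_const]
  split_ifs
  exacts [hA.univ_mem, hA.empty_mem]

lemma isSimpleFn_uAct {W : Type*} {𝓐 : Set (Set S)} (hA : IsSetAlg 𝓐) {X : Set W}
    (u : W → ℝ) {f : S → W} (hf : f ∈ Acts 𝓐 X) : IsSimpleFn 𝓐 (uAct u f) := by
  obtain ⟨_, hfin, hmeas⟩ := hf
  refine ⟨(hfin.image u).subset (Set.range_comp u f).le, fun t => ?_⟩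
  have hpre : uAct u f ⁻¹' {t} = ⋃ v ∈ Set.range f ∩ u ⁻¹' {t}, f ⁻¹' {v} := by
    ext s
    simp [uAct]
  rw [hpre]
  exact hA.biUnion_mem (hfin.inter_of_left _) fun v _ => hmeas v

lemma fint_const [Nonempty S] {p : Set S → ℝ} (hp : p Set.univ = 1) (c : ℝ) :
    fint p (fun _ : S => c) = c := by
  have hfin : (Set.range fun _ : S => c).Finite := by simp
  rw [fint, dif_pos hfin, show hfin.toFinset = {c} by ext; simp, Finset.sum_singleton,
    Set.preimage_const, if_pos (Set.mem_singleton c), hp, mul_one]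

lemma continuous_fint (𝓐 : Set (Set S)) {φ : S → ℝ} (hφ : IsSimpleFn 𝓐 φ) :
    @Continuous _ _ (weakStar 𝓐) _ (fun p : Set S → ℝ => fint p φ) :=
  let _ := weakStar 𝓐
  (continuous_apply (⟨φ, hφ⟩ : {ψ : S → ℝ // IsSimpleFn 𝓐 ψ})).comp
    (continuous_induced_dom (f := fun p (ψ : {ψ : S → ℝ // IsSimpleFn 𝓐 ψ}) => fint p ψ.1))

lemma exists_maxQVal_eq {𝓐 : Set (Set S)} {Q : Set (Set S → ℝ)} (hne : Q.Nonempty)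
    (hQ : @IsCompact _ (weakStar 𝓐) Q) {φ : S → ℝ} (hφ : IsSimpleFn 𝓐 φ) :
    ∃ q ∈ Q, maxQVal Q φ = (fint q φ : EReal) := by
  let _ := weakStar 𝓐
  obtain ⟨q, hq, hmax⟩ := hQ.exists_isMaxOn hne (continuous_fint 𝓐 hφ).continuousOn
  exact ⟨q, hq, le_antisymm (iSup₂_le fun q' hq' => EReal.coe_le_coe_iff.2 (hmax hq'))
    (le_iSup₂_of_le q hq le_rfl)⟩

lemma maxQVal_const [Nonempty S] {𝓐 : Set (Set S)} {Q : Set (Set S → ℝ)}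
    (hQ : Q ⊆ Δset 𝓐) (hne : Q.Nonempty) (c : ℝ) :
    maxQVal Q (fun _ : S => c) = (c : EReal) := by
  have hval : ∀ q ∈ Q, (fint q (fun _ : S => c) : EReal) = c := fun q hq => by
    rw [fint_const (hQ hq).1]
  obtain ⟨q, hq⟩ := hne
  exact le_antisymm (iSup₂_le fun q' hq' => (hval q' hq').le)
    (le_iSup₂_of_le q hq (hval q hq).ge)

lemma IsPriorFamily.minmaxQVal_const [Nonempty S] {𝓐 : Set (Set S)}
    {Qfam : Set (Set (Set S → ℝ))} (h : IsPriorFamily 𝓐 Qfam) (c : ℝ) :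
    minmaxQVal Qfam (fun _ : S => c) = (c : EReal) := by
  have hval : ∀ Q ∈ Qfam, maxQVal Q (fun _ : S => c) = c := fun Q hQ =>
    maxQVal_const (h.2 Q hQ).1 (h.2 Q hQ).2.1 c
  obtain ⟨Q, hQ⟩ := h.1
  exact le_antisymm (iInf₂_le_of_le Q hQ (hval Q hQ).le)
    (le_iInf₂ fun Q' hQ' => (hval Q' hQ').ge)

section Representation

variable [Nonempty S] {W : Type*} {𝓐 : Set (Set S)} {X : Set W}
  {R : (S → W) → (S → W) → Prop} {u : W → ℝ} {xf : (S → W) → W} {Qfam : Set (Set (Set S → ℝ))}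

lemma QRep.minmaxQVal_eq (hA : IsSetAlg 𝓐) (hxf : IsCE 𝓐 X R xf)
    (hQ : IsPriorFamily 𝓐 Qfam) (hrep : QRep 𝓐 X R u Qfam) {f : S → W}
    (hf : f ∈ Acts 𝓐 X) :
    minmaxQVal Qfam (uAct u f) = (u (xf f) : EReal) := by
  obtain ⟨hxX, hfx, hxf'⟩ := hxf f hf
  have hx := constAct_mem_acts (S := S) hA hxX
  have hconst : minmaxQVal Qfam (uAct u (constAct (xf f))) = (u (xf f) : EReal) :=
    hQ.minmaxQVal_const (u (xf f))
  exact (le_antisymm ((hrep _ hx f hf).1 hxf') ((hrep f hf _ hx).1 hfx)).trans hconst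

lemma QRep.subset_qstarOf (hA : IsSetAlg 𝓐) (hxf : IsCE 𝓐 X R xf)
    (hQ : IsPriorFamily 𝓐 Qfam) (hrep : QRep 𝓐 X R u Qfam) :
    Qfam ⊆ QstarOf 𝓐 X u xf := fun Q hQmem =>
  let ⟨hΔ, hne, hconv, hcomp⟩ := hQ.2 Q hQmem
  ⟨hΔ, hne, hconv, hcomp, fun _ hf =>
    (hrep.minmaxQVal_eq hA hxf hQ hf).symm.trans_le (iInf₂_le Q hQmem)⟩

lemma minmaxQVal_qstarOf_eq (hA : IsSetAlg 𝓐) (hxf : IsCE 𝓐 X R xf)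
    (hQ : IsPriorFamily 𝓐 Qfam) (hatt : QAttained 𝓐 X u Qfam) (hrep : QRep 𝓐 X R u Qfam)
    {f : S → W} (hf : f ∈ Acts 𝓐 X) :
    minmaxQVal (QstarOf 𝓐 X u xf) (uAct u f) = (u (xf f) : EReal) := by
  refine le_antisymm ?_ (le_iInf₂ fun Q hQ => hQ.2.2.2.2 f hf)
  obtain ⟨Q₀, hQ₀, hmin⟩ := (hatt f hf).2
  calc minmaxQVal (QstarOf 𝓐 X u xf) (uAct u f)
      ≤ maxQVal Q₀ (uAct u f) := iInf₂_le Q₀ (hrep.subset_qstarOf hA hxf hQ hQ₀)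
    _ = minmaxQVal Qfam (uAct u f) := hmin.symm
    _ = u (xf f) := hrep.minmaxQVal_eq hA hxf hQ hf

lemma qAttained_qstarOf (hA : IsSetAlg 𝓐) (hxf : IsCE 𝓐 X R xf)
    (hQ : IsPriorFamily 𝓐 Qfam) (hatt : QAttained 𝓐 X u Qfam) (hrep : QRep 𝓐 X R u Qfam) :
    QAttained 𝓐 X u (QstarOf 𝓐 X u xf) := by
  refine fun f hf =>
    ⟨fun Q hQ' => exists_maxQVal_eq hQ'.2.1 hQ'.2.2.2.1 (isSimpleFn_uAct hA u hf), ?_⟩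
  obtain ⟨Q₀, hQ₀, hmin⟩ := (hatt f hf).2
  refine ⟨Q₀, hrep.subset_qstarOf hA hxf hQ hQ₀, ?_⟩
  rw [minmaxQVal_qstarOf_eq hA hxf hQ hatt hrep hf, ← hmin, hrep.minmaxQVal_eq hA hxf hQ hf]

lemma qRep_qstarOf (hA : IsSetAlg 𝓐) (hxf : IsCE 𝓐 X R xf)
    (hQ : IsPriorFamily 𝓐 Qfam) (hatt : QAttained 𝓐 X u Qfam) (hrep : QRep 𝓐 X R u Qfam) :
    QRep 𝓐 X R u (QstarOf 𝓐 X u xf) := fun f hf g hg => by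
  rw [hrep f hf g hg, hrep.minmaxQVal_eq hA hxf hQ hf, hrep.minmaxQVal_eq hA hxf hQ hg,
    minmaxQVal_qstarOf_eq hA hxf hQ hatt hrep hf, minmaxQVal_qstarOf_eq hA hxf hQ hatt hrep hg]

end Representation

theorem stmt7_general {S V : Type*} [Nonempty S] [AddCommGroup V] [Module ℝ V]
    (𝓐 : Set (Set S)) (hA : IsSetAlg 𝓐)
    (X : Set V)
    (R : (S → V) → (S → V) → Prop)
    (u : V → ℝ)
    (hrep : ∃ Qfam : Set (Set (Set S → ℝ)), IsPriorFamily 𝓐 Qfam ∧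
      QAttained 𝓐 X u Qfam ∧ QRep 𝓐 X R u Qfam)
    (xf : (S → V) → V) (hxf : IsCE 𝓐 X R xf) :
    (∀ f ∈ Acts 𝓐 X,
      minmaxQVal (QstarOf 𝓐 X u xf) (uAct u f) = (u (xf f) : EReal)) ∧
    QAttained 𝓐 X u (QstarOf 𝓐 X u xf) ∧
    QRep 𝓐 X R u (QstarOf 𝓐 X u xf) ∧
    ∀ Qfam : Set (Set (Set S → ℝ)), IsPriorFamily 𝓐 Qfam → QAttained 𝓐 X u Qfam →
      QRep 𝓐 X R u Qfam → Qfam ⊆ QstarOf 𝓐 X u xf := by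
  obtain ⟨Qfam, hQ, hatt, hrep⟩ := hrep
  exact ⟨fun f hf => minmaxQVal_qstarOf_eq hA hxf hQ hatt hrep hf,
    qAttained_qstarOf hA hxf hQ hatt hrep, qRep_qstarOf hA hxf hQ hatt hrep,
    fun _ hQ' _ hrep' => hrep'.subset_qstarOf hA hxf hQ'⟩

theorem stmt7 {S V : Type*} [Nonempty S] [AddCommGroup V] [Module ℝ V]
    (𝓐 : Set (Set S)) (hA : IsSetAlg 𝓐)
    (X : Set V) (hX : X.Nonempty) (hXc : Convex ℝ X)
    (R : (S → V) → (S → V) → Prop) (hpref : IBPref 𝓐 X R)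
    (u : V → ℝ) (hu : IsNonconstAffine X u) (h0 : (0 : ℝ) ∈ interior (u '' X))
    (hrep : ∃ Qfam : Set (Set (Set S → ℝ)), IsPriorFamily 𝓐 Qfam ∧
      QAttained 𝓐 X u Qfam ∧ QRep 𝓐 X R u Qfam)
    (xf : (S → V) → V) (hxf : IsCE 𝓐 X R xf) :
    (∀ f ∈ Acts 𝓐 X,
      minmaxQVal (QstarOf 𝓐 X u xf) (uAct u f) = (u (xf f) : EReal)) ∧
    QAttained 𝓐 X u (QstarOf 𝓐 X u xf) ∧
    QRep 𝓐 X R u (QstarOf 𝓐 X u xf) ∧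
    ∀ Qfam : Set (Set (Set S → ℝ)), IsPriorFamily 𝓐 Qfam → QAttained 𝓐 X u Qfam →
      QRep 𝓐 X R u Qfam → Qfam ⊆ QstarOf 𝓐 X u xf :=
  stmt7_general 𝓐 hA X R u hrep xf hxf

end Paper
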